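/- For vectors x_{B,1},...,x_{B,m} ∈ ℝ^{d₁} and x_{T,1},...,x_{T,m} ∈ ℝ^{d₂}, and ε uniform on {±1}^m, one has E_ε[ sup_{v₁ ∈ S^{d₁−1}, v₂ ∈ S^{d₂−1}} ∑_{i=1}^m ε_i (v₁ᵀ x_{B,i})(v₂ᵀ x_{T,i}) ] ≤ √( ∑_{i=1}^m ‖x_{B,i}‖₂² ‖x_{T,i}‖₂² ). -/

import Mathlib

/-!
Writing `M ε = ∑ᵢ εᵢ xᵢ ⊗ yᵢ` in the Hilbert tensor product, the bilinear form
`∑ᵢ εᵢ ⟪v, xᵢ⟫ ⟪w, yᵢ⟫` is `⟪v ⊗ w, M ε⟫`, so its supremum over unit vectors is at most `‖M ε‖`.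
Orthogonality of the Rademacher signs gives `E ‖M ε‖² = ∑ᵢ ‖xᵢ ⊗ yᵢ‖² = ∑ᵢ ‖xᵢ‖² ‖yᵢ‖²`, and
`E ‖M ε‖ ≤ √(E ‖M ε‖²)` by Cauchy–Schwarz.
-/

open scoped BigOperators RealInnerProductSpace TensorProduct

open Finset

/-- The random sign corresponding to a boolean. -/
noncomputable def sgn {m : ℕ} (ε : Fin m → Bool) (i : Fin m) : ℝ :=
  if ε i then 1 else -1

lemma sgn_mul_self {m : ℕ} (ε : Fin m → Bool) (i : Fin m) : sgn ε i * sgn ε i = 1 := by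
  unfold sgn; split <;> norm_num

lemma sum_sgn_mul_sgn {m : ℕ} (i j : Fin m) :
    ∑ ε : Fin m → Bool, sgn ε i * sgn ε j = if i = j then (2 : ℝ) ^ m else 0 := by
  split_ifs with hij
  · subst hij
    simp [sgn_mul_self]
  · -- flipping the `i`-th sign is a bijection that negates every summand
    let flip (ε : Fin m → Bool) : Fin m → Bool := Function.update ε i (!ε i)
    have hflip : Function.Involutive flip := fun ε => by simp [flip]
    have hneg (ε : Fin m → Bool) : sgn ε i * sgn ε j = -(sgn (flip ε) i * sgn (flip ε) j) := by
      simp only [flip, sgn, Function.update_self, Function.update_of_ne (Ne.symm hij)]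
      cases ε i <;> cases ε j <;> norm_num
    have := Fintype.sum_equiv hflip.toPerm (fun ε => sgn ε i * sgn ε j)
      (fun ε => -(sgn ε i * sgn ε j)) hneg
    rw [sum_neg_distrib] at this
    linarith

variable {F : Type*} [NormedAddCommGroup F] [InnerProductSpace ℝ F]

lemma sum_norm_sum_sgn_smul_sq {m : ℕ} (y : Fin m → F) :
    ∑ ε : Fin m → Bool, ‖∑ i, sgn ε i • y i‖ ^ 2 = 2 ^ m * ∑ i, ‖y i‖ ^ 2 := by
  calc ∑ ε : Fin m → Bool, ‖∑ i, sgn ε i • y i‖ ^ 2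
      = ∑ i, ∑ j, (∑ ε : Fin m → Bool, sgn ε i * sgn ε j) * ⟪y i, y j⟫ := by
        simp only [← real_inner_self_eq_norm_sq, sum_inner, inner_sum, real_inner_smul_left,
          real_inner_smul_right, sum_mul]
        rw [sum_comm]
        refine sum_congr rfl fun i _ => ?_
        rw [sum_comm]
        exact sum_congr rfl fun j _ => sum_congr rfl fun ε _ => by rw [real_inner_comm]; ring
    _ = 2 ^ m * ∑ i, ‖y i‖ ^ 2 := by
        simp [sum_sgn_mul_sgn, ite_mul, mul_sum]

lemma mean_norm_sum_sgn_smul_le {m : ℕ} (y : Fin m → F) :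
    (1 / 2 ^ m : ℝ) * ∑ ε : Fin m → Bool, ‖∑ i, sgn ε i • y i‖ ≤
      Real.sqrt (∑ i, ‖y i‖ ^ 2) := by
  refine Real.le_sqrt_of_sq_le ?_
  have hcs := sq_sum_le_card_mul_sum_sq (s := univ) (f := fun ε : Fin m → Bool =>
    ‖∑ i, sgn ε i • y i‖)
  simp only [card_univ, Fintype.card_fun, Fintype.card_bool, Fintype.card_fin, Nat.cast_pow,
    Nat.cast_ofNat, sum_norm_sum_sgn_smul_sq] at hcs
  calc ((1 / 2 ^ m : ℝ) * ∑ ε : Fin m → Bool, ‖∑ i, sgn ε i • y i‖) ^ 2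
      ≤ (1 / 2 ^ m : ℝ) ^ 2 * (2 ^ m * (2 ^ m * ∑ i, ‖y i‖ ^ 2)) := by
        rw [mul_pow]; gcongr
    _ = ∑ i, ‖y i‖ ^ 2 := by field_simp

variable {E : Type*} [NormedAddCommGroup E] [InnerProductSpace ℝ E]

lemma sum_sgn_mul_inner_mul_inner_le {m : ℕ} (ε : Fin m → Bool) (x : Fin m → E)
    (y : Fin m → F) (v : E) (w : F) :
    ∑ i, sgn ε i * ⟪v, x i⟫ * ⟪w, y i⟫ ≤ ‖v‖ * ‖w‖ * ‖∑ i, sgn ε i • (x i ⊗ₜ[ℝ] y i)‖ := by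
  calc ∑ i, sgn ε i * ⟪v, x i⟫ * ⟪w, y i⟫
      = ⟪v ⊗ₜ[ℝ] w, ∑ i, sgn ε i • (x i ⊗ₜ[ℝ] y i)⟫ := by
        simp only [TensorProduct.smul_tmul', inner_sum, TensorProduct.inner_tmul,
          real_inner_smul_right]
    _ ≤ ‖v ⊗ₜ[ℝ] w‖ * ‖∑ i, sgn ε i • (x i ⊗ₜ[ℝ] y i)‖ := by
        -- `exact` unifies the tensor product's `Inner` instance with `InnerProductSpace.toInner`
        exact real_inner_le_norm (v ⊗ₜ[ℝ] w) _
    _ = _ := by rw [TensorProduct.norm_tmul]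

/-- The expected supremum over pairs of unit vectors `(v₁, v₂)` of
`∑ᵢ εᵢ (v₁ᵀ x_{B,i})(v₂ᵀ x_{T,i})` is at most `√(∑ᵢ ‖x_{B,i}‖² ‖x_{T,i}‖²)`. -/
theorem stmt2 {d1 d2 m : ℕ}
    (xB : Fin m → EuclideanSpace ℝ (Fin d1)) (xT : Fin m → EuclideanSpace ℝ (Fin d2)) :
    (1 / 2 ^ m : ℝ) * ∑ ε : Fin m → Bool,
        ⨆ v : {v : EuclideanSpace ℝ (Fin d1) // ‖v‖ = 1} ×
              {w : EuclideanSpace ℝ (Fin d2) // ‖w‖ = 1},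
          ∑ i, sgn ε i * (inner ℝ v.1.1 (xB i) : ℝ) * (inner ℝ v.2.1 (xT i) : ℝ) ≤
      Real.sqrt (∑ i, ‖xB i‖ ^ 2 * ‖xT i‖ ^ 2) := by
  calc _ ≤ (1 / 2 ^ m : ℝ) * ∑ ε : Fin m → Bool, ‖∑ i, sgn ε i • (xB i ⊗ₜ[ℝ] xT i)‖ := by
        gcongr with ε
        refine Real.iSup_le (fun ⟨⟨v, hv⟩, ⟨w, hw⟩⟩ => ?_) (norm_nonneg _)
        simpa [hv, hw] using sum_sgn_mul_inner_mul_inner_le ε xB xT v w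
    _ ≤ Real.sqrt (∑ i, ‖xB i ⊗ₜ[ℝ] xT i‖ ^ 2) := mean_norm_sum_sgn_smul_le _
    _ = _ := by simp only [TensorProduct.norm_tmul, mul_pow]
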